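/- In the Temperley–Lieb algebra TL_4, let w_3 = A^4·1 + (A^2 − A^{-6})e_2 + (A^2 − A^{-2})e_1 + (1 − A^{-4})(e_1e_2 + e_2e_1) and w̄_3 = A^{-4}·1 + (A^{-2} − A^6)e_2 + (A^{-2} − A^2)e_1 + (1 − A^4)(e_1e_2 + e_2e_1) be elements of TL_3, and let ι : TL_3 → TL_4 be the R-algebra homomorphism with ι(e_1) = e_1 and ι(e_2) = e_2. Then A^2·ι(w_3) + ι(w_3)·e_3 − A^{-4}·e_3·ι(w̄_3) = A^6·1 + (A^4 − 1)e_1 + (A^4 − A^{-4})e_2 + (A^2 − A^{-2})(e_1e_2 + e_2e_1) + (A^4 − A^{-8})e_3 + (A^2 − A^{-6})(e_1e_3 + e_2e_3 + e_3e_2) + (1 − A^{-4})(e_1e_2e_3 + e_3e_2e_1 + e_1e_3e_2 + e_2e_3e_1). -/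

import Mathlib

/-!
Temperley–Lieb algebra `TL k` over the ring `R = ℤ[A, A⁻¹]` of Laurent polynomials,
with generators `e_1, …, e_{k-1}` and relations
`eᵢ² = δ eᵢ` (with `δ = -A² - A⁻²`), `eᵢ eᵢ₊₁ eᵢ = eᵢ`, `eᵢ₊₁ eᵢ eᵢ₊₁ = eᵢ₊₁`, and
`eᵢ eⱼ = eⱼ eᵢ` for `|i - j| ≥ 2`.
-/

noncomputable section

/-- The ring `R = ℤ[A, A⁻¹]` of Laurent polynomials over `ℤ`. -/
abbrev R : Type := LaurentPolynomial ℤ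

/-- `A n` denotes the `n`-th power `Aⁿ` of the distinguished invertible element `A`. -/
def A (n : ℤ) : R := LaurentPolynomial.T n

/-- `δ = -A² - A⁻²`. -/
def TLδ : R := -A 2 - A (-2)

/-- The Temperley–Lieb relations on the free `R`-algebra on `n` generators `ι 0, …, ι (n-1)`
(where `ι i` corresponds to `e_{i+1}`). -/
inductive TLRel (n : ℕ) : FreeAlgebra R (Fin n) → FreeAlgebra R (Fin n) → Prop
  | sq (i : Fin n) :
      TLRel n (FreeAlgebra.ι R i * FreeAlgebra.ι R i) (TLδ • FreeAlgebra.ι R i)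
  | braid_right (i j : Fin n) (h : (i : ℕ) + 1 = (j : ℕ)) :
      TLRel n (FreeAlgebra.ι R i * FreeAlgebra.ι R j * FreeAlgebra.ι R i) (FreeAlgebra.ι R i)
  | braid_left (i j : Fin n) (h : (i : ℕ) + 1 = (j : ℕ)) :
      TLRel n (FreeAlgebra.ι R j * FreeAlgebra.ι R i * FreeAlgebra.ι R j) (FreeAlgebra.ι R j)
  | comm (i j : Fin n) (h : (i : ℕ) + 2 ≤ (j : ℕ)) :
      TLRel n (FreeAlgebra.ι R i * FreeAlgebra.ι R j) (FreeAlgebra.ι R j * FreeAlgebra.ι R i)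

/-- The Temperley–Lieb algebra `TL_k` on `k` strands: the associative unital `R`-algebra
with generators `e_1, …, e_{k-1}` and the Temperley–Lieb relations. -/
def TL (k : ℕ) : Type := RingQuot (TLRel (k - 1))

instance (k : ℕ) : Ring (TL k) := inferInstanceAs (Ring (RingQuot _))
instance (k : ℕ) : Algebra R (TL k) := inferInstanceAs (Algebra R (RingQuot _))

/-- The generator `e_{i+1}` of `TL k`, for `i : Fin (k-1)`. -/
def e (k : ℕ) (i : Fin (k - 1)) : TL k :=
  RingQuot.mkAlgHom R (TLRel (k - 1)) (FreeAlgebra.ι R i)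

lemma e_sq (k : ℕ) (i : Fin (k - 1)) : e k i * e k i = TLδ • e k i := by
  have h := RingQuot.mkAlgHom_rel R (TLRel.sq (n := k - 1) i)
  simp [map_mul, map_smul] at h
  exact h

lemma e_braid_right (k : ℕ) (i j : Fin (k - 1)) (h : (i : ℕ) + 1 = (j : ℕ)) :
    e k i * e k j * e k i = e k i := by
  have h' := RingQuot.mkAlgHom_rel R (TLRel.braid_right (n := k - 1) i j h)
  simp [map_mul] at h'
  exact h'

lemma e_braid_left (k : ℕ) (i j : Fin (k - 1)) (h : (i : ℕ) + 1 = (j : ℕ)) :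
    e k j * e k i * e k j = e k j := by
  have h' := RingQuot.mkAlgHom_rel R (TLRel.braid_left (n := k - 1) i j h)
  simp [map_mul] at h'
  exact h'

lemma e_comm (k : ℕ) (i j : Fin (k - 1)) (h : (i : ℕ) + 2 ≤ (j : ℕ)) :
    e k i * e k j = e k j * e k i := by
  have h' := RingQuot.mkAlgHom_rel R (TLRel.comm (n := k - 1) i j h)
  simp [map_mul] at h'
  exact h'

/-- The canonical `R`-algebra homomorphism `TL k →ₐ[R] TL m` (for `k ≤ m`) sending each
generator `e_i` of `TL k` to the generator `e_i` of `TL m`. -/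
def TLincl {k m : ℕ} (h : k ≤ m) : TL k →ₐ[R] TL m :=
  RingQuot.liftAlgHom R
    ⟨FreeAlgebra.lift R (fun i => e m (Fin.castLE (Nat.sub_le_sub_right h 1) i)), by
      intro x y hxy
      induction hxy with
      | sq i => simp [map_mul, map_smul, FreeAlgebra.lift_ι_apply, e_sq]
      | braid_right i j hij =>
          simp only [map_mul, FreeAlgebra.lift_ι_apply]
          exact e_braid_right m _ _ (by simpa using hij)
      | braid_left i j hij =>
          simp only [map_mul, FreeAlgebra.lift_ι_apply]
          exact e_braid_left m _ _ (by simpa using hij)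
      | comm i j hij =>
          simp only [map_mul, FreeAlgebra.lift_ι_apply]
          exact e_comm m _ _ (by simpa using hij)⟩

@[simp] lemma TLincl_e {k m : ℕ} (h : k ≤ m) (i : Fin (k - 1)) :
    TLincl h (e k i) = e m (Fin.castLE (Nat.sub_le_sub_right h 1) i) := by
  rw [TLincl, e]
  erw [RingQuot.liftAlgHom_mkAlgHom_apply]
  rw [FreeAlgebra.lift_ι_apply]

/-!
Both `w₃` and `w̄₃` have the shape `a + b e₂ + c e₁ + d (e₁e₂ + e₂e₁)`. Multiplying the image of
such an element in `TL 4` by `e₃` on either side needs only `e₁e₃ = e₃e₁` to land in the span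
of eight fixed monomials. The identity then reduces to one equality of Laurent polynomials per
monomial, using `AᵐAⁿ = Aᵐ⁺ⁿ`.
-/

lemma A_add (m n : ℤ) : A (m + n) = A m * A n := LaurentPolynomial.T_add m n

lemma A_zero : A 0 = 1 := LaurentPolynomial.T_zero

section TL3ToTL4

local notation "ι₃" => (TLincl (by norm_num : 3 ≤ 4) : TL 3 →ₐ[R] TL 4)
local notation "g₁" => e 3 ⟨0, by norm_num⟩
local notation "g₂" => e 3 ⟨1, by norm_num⟩
local notation "E₁" => e 4 ⟨0, by norm_num⟩
local notation "E₂" => e 4 ⟨1, by norm_num⟩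
local notation "E₃" => e 4 ⟨2, by norm_num⟩

lemma TLincl_three_four_apply (a b c d : R) :
    ι₃ (a • 1 + b • g₂ + c • g₁ + d • (g₁ * g₂ + g₂ * g₁)) =
      a • 1 + b • E₂ + c • E₁ + d • (E₁ * E₂ + E₂ * E₁) := by
  simp only [map_add, map_smul, map_mul, map_one, TLincl_e]
  rfl

lemma e_three_mul_e_one : E₃ * E₁ = E₁ * E₃ :=
  (e_comm 4 ⟨0, by norm_num⟩ ⟨2, by norm_num⟩ le_rfl).symm

lemma TLincl_three_four_apply_mul_e_three (a b c d : R) :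
    ι₃ (a • 1 + b • g₂ + c • g₁ + d • (g₁ * g₂ + g₂ * g₁)) * E₃ =
      a • E₃ + b • (E₂ * E₃) + c • (E₁ * E₃) + d • (E₁ * E₂ * E₃ + E₂ * E₃ * E₁) := by
  rw [TLincl_three_four_apply]
  simp only [add_mul, smul_mul_assoc, one_mul]
  rw [mul_assoc E₂ E₁, ← e_three_mul_e_one, ← mul_assoc]

lemma e_three_mul_TLincl_three_four_apply (a b c d : R) :
    E₃ * ι₃ (a • 1 + b • g₂ + c • g₁ + d • (g₁ * g₂ + g₂ * g₁)) =
      a • E₃ + b • (E₃ * E₂) + c • (E₁ * E₃) + d • (E₁ * E₃ * E₂ + E₃ * E₂ * E₁) := by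
  rw [TLincl_three_four_apply]
  simp only [mul_add, mul_smul_comm, mul_one, ← mul_assoc, e_three_mul_e_one]

end TL3ToTL4

/-- Equation (4) of the paper: the recursive computation of `w(Id₄)` in the
Temperley–Lieb algebra `TL₄`, where `w₃ = w(Id₃)` and `w̄₃` its mirror image live in `TL₃`,
and `ι : TL₃ →ₐ[R] TL₄` is the `R`-algebra homomorphism with `ι e₁ = e₁`, `ι e₂ = e₂`. -/
theorem wId4_recursion :
    let f₁ : TL 3 := e 3 ⟨0, by norm_num⟩
    let f₂ : TL 3 := e 3 ⟨1, by norm_num⟩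
    let e₁ : TL 4 := e 4 ⟨0, by norm_num⟩
    let e₂ : TL 4 := e 4 ⟨1, by norm_num⟩
    let e₃ : TL 4 := e 4 ⟨2, by norm_num⟩
    let ι : TL 3 →ₐ[R] TL 4 := TLincl (by norm_num)
    let w₃ : TL 3 := A 4 • (1 : TL 3) + (A 2 - A (-6)) • f₂ + (A 2 - A (-2)) • f₁
        + (1 - A (-4)) • (f₁ * f₂ + f₂ * f₁)
    let w₃bar : TL 3 := A (-4) • (1 : TL 3) + (A (-2) - A 6) • f₂ + (A (-2) - A 2) • f₁
        + (1 - A 4) • (f₁ * f₂ + f₂ * f₁)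
    A 2 • ι w₃ + ι w₃ * e₃ - A (-4) • (e₃ * ι w₃bar) =
      A 6 • (1 : TL 4) + (A 4 - 1) • e₁ + (A 4 - A (-4)) • e₂
        + (A 2 - A (-2)) • (e₁ * e₂ + e₂ * e₁) + (A 4 - A (-8)) • e₃
        + (A 2 - A (-6)) • (e₁ * e₃ + e₂ * e₃ + e₃ * e₂)
        + (1 - A (-4)) • (e₁ * e₂ * e₃ + e₃ * e₂ * e₁ + e₁ * e₃ * e₂ + e₂ * e₃ * e₁) := by
  intro f₁ f₂ e₁ e₂ e₃ ι w₃ w₃bar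
  rw [TLincl_three_four_apply_mul_e_three, e_three_mul_TLincl_three_four_apply,
    TLincl_three_four_apply]
  match_scalars <;> simp only [mul_sub, mul_one, ← A_add] <;> norm_num [A_zero]

end
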